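/- arXiv:2202.06837 — 4 statements merged into one kernel-verified Lean document; each statement's English description precedes it below -/
import Mathlib

section
/- Let (A,d,⟨·,·⟩) be a cochain complex with pairing and let P : A → A be a propagator with associated projection π := π_P = id + d∘P + P∘d. Define P₂ := (π − id)∘P∘(π − id) and P₃ := −P₂∘d∘P₂. Then P₃ is a special propagator with respect to the same projection, i.e. P₃∘P₃ = 0, P₃∘d∘P₃ = −P₃, ⟨P₃x,y⟩ = (−1)^{deg x}⟨x,P₃y⟩ for homogeneous x, and id + d∘P₃ + P₃∘d = π. -/
noncomputable section

/-- A cochain complex over `ℝ` (with a `ℤ`-grading realized as an internal direct sum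
of submodules) together with a graded-symmetric pairing of degree `n` compatible with
the differential. -/
structure PairedComplex (A : Type*) [AddCommGroup A] [Module ℝ A] where
  /-- the grading `A = ⊕ᵢ Aⁱ` -/
  grading : ℤ → Submodule ℝ A
  internal : DirectSum.IsInternal grading
  /-- the differential -/
  d : A →ₗ[ℝ] A
  d_degree : ∀ i : ℤ, ∀ x ∈ grading i, d x ∈ grading (i + 1)
  d_sq : ∀ x : A, d (d x) = 0
  /-- the degree of the pairing -/
  n : ℤ
  /-- the pairing -/
  pair : A →ₗ[ℝ] A →ₗ[ℝ] ℝ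
  pair_degree : ∀ i j : ℤ, i + j ≠ n → ∀ x ∈ grading i, ∀ y ∈ grading j, pair x y = 0
  pair_symm : ∀ i j : ℤ, ∀ x ∈ grading i, ∀ y ∈ grading j,
      pair x y = (-1 : ℝ) ^ (i * j) * pair y x
  pair_d : ∀ i : ℤ, ∀ x ∈ grading i, ∀ y : A,
      pair (d x) y = (-1 : ℝ) ^ (1 + i) * pair x (d y)

namespace PairedComplex

variable {A : Type*} [AddCommGroup A] [Module ℝ A] (X : PairedComplex A)

/-- `f` is homogeneous of degree `k`. -/
def IsDegree (f : A →ₗ[ℝ] A) (k : ℤ) : Prop :=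
  ∀ i : ℤ, ∀ x ∈ X.grading i, f x ∈ X.grading (i + k)

/-- A chain map: a degree `0` map commuting with the differential. -/
def IsChainMap (f : A →ₗ[ℝ] A) : Prop :=
  X.IsDegree f 0 ∧ ∀ x : A, f (X.d x) = X.d (f x)

/-- A projection: an idempotent chain map. -/
def IsProjection (p : A →ₗ[ℝ] A) : Prop :=
  X.IsChainMap p ∧ ∀ x : A, p (p x) = p x

/-- The projection `π_P = id + d∘P + P∘d` associated to a homotopy operator `P`. -/
def assocProj (P : A →ₗ[ℝ] A) : A →ₗ[ℝ] A :=
  LinearMap.id + X.d ∘ₗ P + P ∘ₗ X.d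

/-- A homotopy operator: a degree `-1` map such that `−d∘P − P∘d` is a projection. -/
def IsHomotopyOperator (P : A →ₗ[ℝ] A) : Prop :=
  X.IsDegree P (-1) ∧ X.IsProjection (-(X.d ∘ₗ P) - P ∘ₗ X.d)

/-- A homotopy operator `P` is special if `P∘P = 0` and `P∘d∘P = −P`. -/
def IsSpecial (P : A →ₗ[ℝ] A) : Prop :=
  (∀ x : A, P (P x) = 0) ∧ ∀ x : A, P (X.d (P x)) = -(P x)

/-- The symmetry property `⟨Px,y⟩ = (−1)^{deg x} ⟨x,Py⟩` of a propagator. -/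
def IsSymmetricDeg (P : A →ₗ[ℝ] A) : Prop :=
  ∀ i : ℤ, ∀ x ∈ X.grading i, ∀ y : A,
    X.pair (P x) y = (-1 : ℝ) ^ i * X.pair x (P y)

/-- A propagator: a homotopy operator satisfying the symmetry property. -/
def IsPropagator (P : A →ₗ[ℝ] A) : Prop :=
  X.IsHomotopyOperator P ∧ X.IsSymmetricDeg P

/-- A symmetric operator: `⟨px,y⟩ = ⟨x,py⟩`. -/
def IsSymmetric (p : A →ₗ[ℝ] A) : Prop :=
  ∀ x y : A, X.pair (p x) y = X.pair x (p y)

/-- Nondegeneracy of the pairing. -/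
def Nondegenerate : Prop :=
  ∀ x : A, (∀ y : A, X.pair x y = 0) → x = 0

/-- The pairing is perfect: the musical map `x ↦ ⟨x,·⟩` is an isomorphism onto the
graded dual, i.e. it is injective and every linear functional on `A^{n-i}` is
represented by an element of `A^i`. -/
def Perfect : Prop :=
  X.Nondegenerate ∧
    ∀ i : ℤ, ∀ φ : ↥(X.grading (X.n - i)) →ₗ[ℝ] ℝ,
      ∃ x ∈ X.grading i, ∀ y : ↥(X.grading (X.n - i)), X.pair x (y : A) = φ y

/-- A chain map induces an isomorphism on cohomology (elementwise formulation). -/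
def IsQuasiIso (f : A →ₗ[ℝ] A) : Prop :=
  (∀ x : A, X.d x = 0 → ∃ y : A, X.d y = 0 ∧ ∃ z : A, f y - x = X.d z) ∧
  (∀ y : A, X.d y = 0 → (∃ z : A, f y = X.d z) → ∃ w : A, y = X.d w)

/-- A graded subspace: spanned by its homogeneous elements. -/
def IsGradedSubspace (B : Submodule ℝ A) : Prop :=
  ∀ x ∈ B, x ∈ ⨆ i : ℤ, B ⊓ X.grading i

/-- A subcomplex: a graded subspace preserved by the differential. -/
def IsSubcomplex (B : Submodule ℝ A) : Prop :=
  X.IsGradedSubspace B ∧ ∀ x ∈ B, X.d x ∈ B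

/-- The inclusion `B ↪ A` is a quasi-isomorphism (elementwise formulation). -/
def InclQuasiIso (B : Submodule ℝ A) : Prop :=
  (∀ x : A, X.d x = 0 → ∃ b ∈ B, X.d b = 0 ∧ ∃ z : A, x - b = X.d z) ∧
  (∀ b ∈ B, X.d b = 0 → (∃ z : A, b = X.d z) → ∃ c ∈ B, b = X.d c)

/-- The restriction of the pairing to `B` is perfect. -/
def SubPerfect (B : Submodule ℝ A) : Prop :=
  (∀ x ∈ B, (∀ y ∈ B, X.pair x y = 0) → x = 0) ∧
    ∀ i : ℤ, ∀ φ : ↥(B ⊓ X.grading (X.n - i)) →ₗ[ℝ] ℝ,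
      ∃ x ∈ B ⊓ X.grading i, ∀ y : ↥(B ⊓ X.grading (X.n - i)), X.pair x (y : A) = φ y

/-- The orthogonal complement `B^⊥ = {x | ⟨x,b⟩ = 0 ∀ b ∈ B}`. -/
def perp (B : Submodule ℝ A) : Submodule ℝ A where
  carrier := {x : A | ∀ b ∈ B, X.pair x b = 0}
  add_mem' := by
    intro x y hx hy
    intro b hb
    have hx' := hx b hb
    have hy' := hy b hb
    simp only [map_add, LinearMap.add_apply, hx', hy', add_zero]
  zero_mem' := by
    intro b hb
    simp
  smul_mem' := by
    intro c x hx b hb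
    have hx' := hx b hb
    simp only [map_smul, LinearMap.smul_apply, hx', smul_zero]

/-- A harmonic subspace: a graded subspace `H` with `ker d = H ⊕ im d`. -/
def IsHarmonic (H : Submodule ℝ A) : Prop :=
  X.IsGradedSubspace H ∧ H ≤ LinearMap.ker X.d ∧
    H ⊓ LinearMap.range X.d = ⊥ ∧ H ⊔ LinearMap.range X.d = LinearMap.ker X.d

/-- A Hodge decomposition `B = H ⊕ d(B) ⊕ C` of a subcomplex `B ⊆ A` (with respect to
the restricted pairing); taking `B = ⊤` gives a Hodge decomposition of `A`. -/
def IsHodgeOn (B H C : Submodule ℝ A) : Prop :=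
  H ≤ B ∧ C ≤ B ∧ X.IsGradedSubspace H ∧ X.IsGradedSubspace C ∧
  H ≤ LinearMap.ker X.d ∧
  H ⊓ Submodule.map X.d B = ⊥ ∧
  H ⊔ Submodule.map X.d B = LinearMap.ker X.d ⊓ B ∧
  C ⊓ LinearMap.ker X.d = ⊥ ∧
  C ⊔ (LinearMap.ker X.d ⊓ B) = B ∧
  (∀ c ∈ C, ∀ c' ∈ C, X.pair c c' = 0) ∧
  (∀ c ∈ C, ∀ h ∈ H, X.pair c h = 0)

/-- A Hodge decomposition `A = H ⊕ im d ⊕ C` of the full complex. -/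
def IsHodge (H C : Submodule ℝ A) : Prop :=
  X.IsHodgeOn ⊤ H C

/-- `A` is of Hodge type if it admits a Hodge decomposition. -/
def IsHodgeType : Prop :=
  ∃ H C : Submodule ℝ A, X.IsHodge H C

/-- The operator `P_{H,C}` canonically associated to a Hodge decomposition `(H,C)`:
`P(dy) = −y` for `y ∈ C`, and `P = 0` on `H ⊕ C`. -/
def IsHodgeOperator (H C : Submodule ℝ A) (P : A →ₗ[ℝ] A) : Prop :=
  (∀ y ∈ C, P (X.d y) = -y) ∧ (∀ x ∈ H, P x = 0) ∧ ∀ x ∈ C, P x = 0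

/-- The degenerate subspace `A_deg = {a | ⟨a,x⟩ = 0 ∀ x}`. -/
def degSub : Submodule ℝ A := X.perp ⊤

/-- The induced pairing on cohomology is nondegenerate (elementwise formulation). -/
def CohomNondeg : Prop :=
  ∀ x : A, X.d x = 0 → (∀ y : A, X.d y = 0 → X.pair x y = 0) → ∃ z : A, x = X.d z

/-- The induced pairing on cohomology is perfect (elementwise formulation). -/
def CohomPerfect : Prop :=
  X.CohomNondeg ∧
    ∀ i : ℤ, ∀ φ : ↥(LinearMap.ker X.d ⊓ X.grading (X.n - i)) →ₗ[ℝ] ℝ,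
      (∀ y : ↥(LinearMap.ker X.d ⊓ X.grading (X.n - i)),
          (∃ z : A, (y : A) = X.d z) → φ y = 0) →
      ∃ x ∈ LinearMap.ker X.d ⊓ X.grading i,
        ∀ y : ↥(LinearMap.ker X.d ⊓ X.grading (X.n - i)), X.pair x (y : A) = φ y

end PairedComplex

namespace PairedComplex

variable {A : Type*} [AddCommGroup A] [Module ℝ A] (X : PairedComplex A)

/-- A realization of the nondegenerate quotient `Q(A) = A / A_deg`:
a surjective chain map with kernel `A_deg` preserving pairings, gradings and degree. -/
def IsQuotientMap {B : Type*} [AddCommGroup B] [Module ℝ B]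
    (Y : PairedComplex B) (q : A →ₗ[ℝ] B) : Prop :=
  Function.Surjective q ∧
  LinearMap.ker q = X.degSub ∧
  (∀ x : A, q (X.d x) = Y.d (q x)) ∧
  (∀ x y : A, Y.pair (q x) (q y) = X.pair x y) ∧
  (∀ i : ℤ, ∀ x ∈ X.grading i, q x ∈ Y.grading i) ∧
  Y.n = X.n

/-- A Hodge star on a nonnegatively graded cochain complex with pairing of degree `n`:
a degree-reversing involution (up to sign) such that `(x,y) := ⟨x,⋆y⟩` is a positive
definite inner product. -/
def IsHodgeStar (star : A →ₗ[ℝ] A) : Prop :=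
  (∀ i : ℤ, ∀ x ∈ X.grading i, star x ∈ X.grading (X.n - i)) ∧
  (∀ i : ℤ, ∀ x ∈ X.grading i, star (star x) = ((-1 : ℝ) ^ (i * (X.n - i))) • x) ∧
  (∀ x y : A, X.pair x (star y) = X.pair y (star x)) ∧
  (∀ x : A, x ≠ 0 → 0 < X.pair x (star x))

end PairedComplex

/-- A differential graded algebra with pairing: a `PairedComplex` together with an
associative product of degree `0` satisfying the Leibniz rule and compatible with the
pairing. -/
structure PairedDGA (A : Type*) [AddCommGroup A] [Module ℝ A] extends
    PairedComplex A where
  /-- the product -/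
  mul : A →ₗ[ℝ] A →ₗ[ℝ] A
  mul_degree : ∀ i j : ℤ, ∀ x ∈ grading i, ∀ y ∈ grading j, mul x y ∈ grading (i + j)
  mul_assoc' : ∀ x y z : A, mul (mul x y) z = mul x (mul y z)
  leibniz : ∀ i : ℤ, ∀ x ∈ grading i, ∀ y : A,
      d (mul x y) = mul (d x) y + ((-1 : ℝ) ^ i) • mul x (d y)
  pair_mul : ∀ x y z : A, pair (mul x y) z = pair x (mul y z)

namespace PairedDGA

variable {A : Type*} [AddCommGroup A] [Module ℝ A] (Y : PairedDGA A)

/-- `one` is a unit for the product. -/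
def IsUnit (one : A) : Prop :=
  one ≠ 0 ∧ one ∈ Y.grading 0 ∧ ∀ x : A, Y.mul one x = x ∧ Y.mul x one = x

/-- graded commutativity. -/
def IsCommutative : Prop :=
  ∀ i j : ℤ, ∀ x ∈ Y.grading i, ∀ y ∈ Y.grading j,
    Y.mul x y = ((-1 : ℝ) ^ (i * j)) • Y.mul y x

/-- An orientation of degree `n` inducing the pairing: a chain-level functional
supported in degree `n`, vanishing on boundaries, nontrivial on cohomology,
with `⟨x,y⟩ = o(x∧y)`. -/
def IsOrientation (o : A →ₗ[ℝ] ℝ) : Prop :=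
  (∀ i : ℤ, i ≠ Y.n → ∀ x ∈ Y.grading i, o x = 0) ∧
  (∀ x : A, o (Y.d x) = 0) ∧
  (∃ x : A, Y.d x = 0 ∧ o x ≠ 0) ∧
  (∀ x y : A, Y.pair x y = o (Y.mul x y))

/-- The small subalgebra `S_P`: the smallest graded dg-subalgebra containing the
harmonic subspace `H_P = im π_P` and preserved by `P`. -/
def smallSub (P : A →ₗ[ℝ] A) : Submodule ℝ A :=
  sInf {S : Submodule ℝ A |
    LinearMap.range (Y.toPairedComplex.assocProj P) ≤ S ∧
    Y.toPairedComplex.IsGradedSubspace S ∧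
    (∀ x ∈ S, Y.d x ∈ S) ∧
    (∀ x ∈ S, ∀ y ∈ S, Y.mul x y ∈ S) ∧
    (∀ x ∈ S, P x ∈ S)}

end PairedDGA

/-- Elements of `A` obtained from homogeneous elements of the harmonic subspace
`H_P = im π_P` by iterated applications of `P` and of the product. -/
inductive TreeGen {A : Type*} [AddCommGroup A] [Module ℝ A]
    (Y : PairedDGA A) (P : A →ₗ[ℝ] A) : A → Prop
  | base : ∀ (i : ℤ) (x : A), x ∈ Y.grading i →
      x ∈ LinearMap.range (Y.toPairedComplex.assocProj P) → TreeGen Y P x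
  | mul : ∀ x y : A, TreeGen Y P x → TreeGen Y P y → TreeGen Y P (Y.mul x y)
  | app : ∀ x : A, TreeGen Y P x → TreeGen Y P (P x)


section Statements

variable {A B : Type*} [AddCommGroup A] [Module ℝ A] [AddCommGroup B] [Module ℝ B]
/-- any propagator can be modified to a special propagator `P₃` with the
same associated projection. -/
theorem stmt0 (X : PairedComplex A) (P : A →ₗ[ℝ] A) (hP : X.IsPropagator P)
    (P₂ P₃ : A →ₗ[ℝ] A)
    (hP₂ : P₂ = (X.assocProj P - LinearMap.id) ∘ₗ P ∘ₗ (X.assocProj P - LinearMap.id))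
    (hP₃ : P₃ = -(P₂ ∘ₗ X.d ∘ₗ P₂)) :
    X.IsPropagator P₃ ∧ X.IsSpecial P₃ ∧ X.assocProj P₃ = X.assocProj P := by
  obtain ⟨⟨hPdeg, hproj⟩, hPsym⟩ := hP
  set h : A →ₗ[ℝ] A := X.d ∘ₗ P + P ∘ₗ X.d with hdef
  have happ : ∀ x : A, h x = X.d (P x) + P (X.d x) := fun x => by
    simp [hdef]
  have hpapp : ∀ x : A, (-(X.d ∘ₗ P) - P ∘ₗ X.d) x = -(h x) := fun x => by
    simp [hdef]; abel
  have hhh : ∀ x : A, h (h x) = -(h x) := by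
    intro x
    have hpp := hproj.2 x
    rw [hpapp x] at hpp
    rw [show (-(X.d ∘ₗ P) - P ∘ₗ X.d) (-(h x)) = -((-(X.d ∘ₗ P) - P ∘ₗ X.d) (h x)) from
      map_neg _ _] at hpp
    rw [hpapp (h x)] at hpp
    simpa using hpp
  have hd2 : ∀ x : A, X.d (X.d x) = 0 := X.d_sq
  have dh : ∀ x : A, X.d (h x) = h (X.d x) := by
    intro x
    simp [happ, hd2]
  have hπ : X.assocProj P - LinearMap.id = h := by
    ext x
    simp only [PairedComplex.assocProj, hdef, LinearMap.sub_apply, LinearMap.add_apply,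
      LinearMap.comp_apply, LinearMap.id_apply]
    abel
  rw [hπ] at hP₂
  have Qapp : ∀ x : A, P₂ x = h (P (h x)) := fun x => by rw [hP₂]; rfl
  have Rapp : ∀ x : A, P₃ x = -(P₂ (X.d (P₂ x))) := fun x => by rw [hP₃]; rfl
  have hQ : ∀ x : A, h (P₂ x) = -(P₂ x) := fun x => by rw [Qapp, hhh]
  have Qh : ∀ x : A, P₂ (h x) = -(P₂ x) := fun x => by
    rw [Qapp (h x), hhh x, map_neg, map_neg, ← Qapp x]
  have homot : ∀ x : A, X.d (P₂ x) + P₂ (X.d x) = h x := by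
    intro x
    rw [Qapp x, Qapp (X.d x), dh (P (h x)), ← dh x, ← map_add h, ← happ (h x),
      hhh x, map_neg, hhh x, neg_neg]
  have dQd : ∀ x : A, X.d (P₂ (X.d x)) = h (X.d x) := by
    intro x
    have hh := homot (X.d x)
    rw [hd2 x, map_zero, add_zero] at hh
    exact hh
  have Rd : ∀ x : A, P₃ (X.d x) = P₂ (X.d x) := by
    intro x
    rw [Rapp (X.d x), dQd x, Qh (X.d x), neg_neg]
  have dR : ∀ x : A, X.d (P₃ x) = X.d (P₂ x) := by
    intro x
    rw [Rapp x, map_neg, dQd (P₂ x), ← dh (P₂ x), hQ x, map_neg, neg_neg]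
  have dRRd : ∀ x : A, X.d (P₃ x) + P₃ (X.d x) = h x := by
    intro x
    rw [dR x, Rd x]
    exact homot x
  have RdR : ∀ x : A, P₃ (X.d (P₃ x)) = -(P₃ x) := by
    intro x
    rw [dR x, Rd (P₂ x), ← neg_neg (P₂ (X.d (P₂ x))), ← Rapp x]
  have QQd : ∀ x : A, P₂ (P₂ (X.d x)) = -(P₂ x) - P₂ (X.d (P₂ x)) := by
    intro x
    have h1 := Qh x
    rw [← homot x, map_add] at h1
    exact eq_sub_of_add_eq' h1
  have RR : ∀ x : A, P₃ (P₃ x) = 0 := by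
    intro x
    rw [Rapp (P₃ x)]
    have e1 : P₂ (P₃ x) = P₂ (P₂ x) + P₂ (X.d (P₂ (P₂ x))) := by
      rw [Rapp x, map_neg, QQd (P₂ x)]
      abel
    rw [e1]
    simp only [map_add]
    rw [dQd (P₂ (P₂ x)), Qh (X.d (P₂ (P₂ x)))]
    simp
  -- grading lemmas
  have hdeg : ∀ i : ℤ, ∀ x ∈ X.grading i, h x ∈ X.grading i := by
    intro i x hx
    rw [happ]
    have h1 := X.d_degree _ _ (hPdeg i x hx)
    have h2 := hPdeg _ _ (X.d_degree i x hx)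
    have e1 : i + -1 + 1 = i := by ring
    have e2 : i + 1 + -1 = i := by ring
    rw [e1] at h1; rw [e2] at h2
    exact add_mem h1 h2
  have Qdeg : ∀ i : ℤ, ∀ x ∈ X.grading i, P₂ x ∈ X.grading (i + -1) := by
    intro i x hx
    rw [Qapp]
    exact hdeg _ _ (hPdeg _ _ (hdeg _ _ hx))
  have Rdeg : ∀ i : ℤ, ∀ x ∈ X.grading i, P₃ x ∈ X.grading (i + -1) := by
    intro i x hx
    rw [Rapp]
    have h1 := X.d_degree _ _ (Qdeg i x hx)
    have e : i + -1 + 1 = i := by ring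
    rw [e] at h1
    exact neg_mem (Qdeg _ _ h1)
  -- pairing lemmas
  have sq : ∀ k : ℤ, ((-1 : ℝ) ^ k) * ((-1 : ℝ) ^ k) = 1 := by
    intro k
    rw [← zpow_add₀ (by norm_num : (-1 : ℝ) ≠ 0)]
    exact Even.neg_one_zpow ⟨k, rfl⟩
  have hsym : ∀ i : ℤ, ∀ x ∈ X.grading i, ∀ y : A, X.pair (h x) y = X.pair x (h y) := by
    intro i x hx y
    rw [happ x, happ y]
    simp only [map_add, LinearMap.add_apply]
    have t1 : X.pair (X.d (P x)) y = X.pair x (P (X.d y)) := by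
      have e1 := X.pair_d (i + -1) (P x) (hPdeg i x hx) y
      have e : (1 : ℤ) + (i + -1) = i := by ring
      rw [e] at e1
      rw [e1, hPsym i x hx (X.d y), ← mul_assoc, sq, one_mul]
    have t2 : X.pair (P (X.d x)) y = X.pair x (X.d (P y)) := by
      have e1 := hPsym (i + 1) (X.d x) (X.d_degree i x hx) y
      have e2 := X.pair_d i x hx (P y)
      have e : (1 : ℤ) + i = i + 1 := by ring
      rw [e] at e2
      rw [e1, e2, ← mul_assoc, sq, one_mul]
    rw [t1, t2]
    exact add_comm _ _
  have Qsym : ∀ i : ℤ, ∀ x ∈ X.grading i, ∀ y : A,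
      X.pair (P₂ x) y = (-1 : ℝ) ^ i * X.pair x (P₂ y) := by
    intro i x hx y
    rw [Qapp x, Qapp y]
    rw [hsym (i + -1) (P (h x)) (hPdeg i (h x) (hdeg i x hx)) y]
    rw [hPsym i (h x) (hdeg i x hx) (h y)]
    rw [hsym i x hx (P (h y))]
  have Rsym : ∀ i : ℤ, ∀ x ∈ X.grading i, ∀ y : A,
      X.pair (P₃ x) y = (-1 : ℝ) ^ i * X.pair x (P₃ y) := by
    intro i x hx y
    rw [Rapp x, Rapp y]
    rw [map_neg, LinearMap.neg_apply, map_neg]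
    have m1 : X.d (P₂ x) ∈ X.grading i := by
      have h1 := X.d_degree _ _ (Qdeg i x hx)
      have e : i + -1 + 1 = i := by ring
      rwa [e] at h1
    rw [Qsym i (X.d (P₂ x)) m1 y]
    have e1 := X.pair_d (i + -1) (P₂ x) (Qdeg i x hx) (P₂ y)
    have e : (1 : ℤ) + (i + -1) = i := by ring
    rw [e] at e1
    rw [e1, Qsym i x hx (X.d (P₂ y))]
    linear_combination (-((-1 : ℝ) ^ i * X.pair x (P₂ (X.d (P₂ y))))) * sq i
  have key : -(X.d ∘ₗ P₃) - P₃ ∘ₗ X.d = -(X.d ∘ₗ P) - P ∘ₗ X.d := by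
    ext x
    simp only [LinearMap.sub_apply, LinearMap.neg_apply, LinearMap.comp_apply]
    have h1 : -(X.d (P₃ x)) - P₃ (X.d x) = -(h x) := by
      rw [← dRRd x]; abel
    have h2 : -(X.d (P x)) - P (X.d x) = -(h x) := by
      rw [happ x]; abel
    rw [h1, h2]
  have proj_eq : X.assocProj P₃ = X.assocProj P := by
    ext x
    simp only [PairedComplex.assocProj, LinearMap.add_apply, LinearMap.comp_apply,
      LinearMap.id_apply]
    have h1 := dRRd x
    rw [happ x] at h1
    rw [add_assoc, add_assoc, h1]
  refine ⟨⟨⟨Rdeg, ?_⟩, Rsym⟩, ⟨RR, RdR⟩, proj_eq⟩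
  rw [key]
  exact hproj

end Statements
end
end

section
/- Let (A,d,⟨·,·⟩) be a cyclic cochain complex and H ⊆ A a harmonic subspace. Then: (1) the restriction of the pairing to H is perfect, so H is a cyclic subcomplex; (2) the inclusion H ↪ A is a quasi-isomorphism; (3) A = H ⊕ H^⊥, so there is a unique symmetric projection π_H : A → A with image H and kernel H^⊥; and (4) π_H is a harmonic projection (in particular im d ⊆ ker π_H, so d∘π_H = π_H∘d = 0). -/
noncomputable section

/-!
Since `⟨dz, y⟩ = ±⟨z, dy⟩`, cocycles are orthogonal to coboundaries, so on `ker d = H ⊕ im d`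
the pairing only sees `H`. Perfectness gives two things. A homogeneous `x` orthogonal to all
cocycles is exact: `dv ↦ ⟨x, v⟩` is a well-defined functional, represented by some `w`, and then
`x = ±dw`; hence `H ∩ H^⊥ = 0`. A functional on `H ∩ A^{n-i}`, extended by zero on `im d`, is
represented by an element of `A^i` which is then a cocycle, and its `H`-component represents the
functional on `H`. Applied to `⟨a, ·⟩` for homogeneous `a`, this splits `a` degreewise into
`H ⊕ H^⊥`. The projection along `H^⊥` therefore preserves degrees; it kills `im d ⊆ H^⊥` and lands
in `H ⊆ ker d`, so it is a chain map, and it is symmetric because `H` and `H^⊥` are mutually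
orthogonal.
-/

namespace LinearMap

variable {K V V' W : Type*} [Field K] [AddCommGroup V] [Module K V] [AddCommGroup V']
  [Module K V'] [AddCommGroup W] [Module K W]

theorem exists_comp_eq_of_ker_le (T : V →ₗ[K] V') (g : V →ₗ[K] W) (h : ker T ≤ ker g) :
    ∃ Ψ : V' →ₗ[K] W, Ψ ∘ₗ T = g := by
  obtain ⟨L, hL⟩ := ((ker T).liftQ T le_rfl).exists_leftInverse_of_injective
    (Submodule.ker_liftQ_eq_bot _ _ _ le_rfl)
  refine ⟨(ker T).liftQ g h ∘ₗ L, LinearMap.ext fun v => ?_⟩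
  have hv : L (T v) = (ker T).mkQ v := congr($hL ((ker T).mkQ v))
  simp [hv]

theorem exists_extend_of_disjoint {p q : Submodule K V} (hpq : Disjoint p q) (f : p →ₗ[K] W) :
    ∃ F : V →ₗ[K] W, F ∘ₗ p.subtype = f ∧ q ≤ ker F := by
  obtain ⟨Ψ, hΨ⟩ := exists_comp_eq_of_ker_le (q.mkQ ∘ₗ p.subtype) f (by
    rw [ker_comp, Submodule.ker_mkQ, Submodule.disjoint_iff_comap_eq_bot.1 hpq]
    exact bot_le)
  refine ⟨Ψ ∘ₗ q.mkQ, hΨ, fun x hx => ?_⟩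
  simp [(Submodule.Quotient.mk_eq_zero q).2 hx]

end LinearMap

namespace PairedComplex

variable {A : Type*} [AddCommGroup A] [Module ℝ A] (X : PairedComplex A)

instance : DirectSum.Decomposition X.grading := X.internal.chooseDecomposition

def proj (i : ℤ) : A →ₗ[ℝ] A :=
  (X.grading i).subtype ∘ₗ DirectSum.component ℝ ℤ (fun j => X.grading j) i ∘ₗ
    (DirectSum.decomposeLinearEquiv X.grading).toLinearMap

theorem proj_mem (i : ℤ) (x : A) : X.proj i x ∈ X.grading i :=
  (DirectSum.decompose X.grading x i).2

theorem proj_of_mem {i : ℤ} {x : A} (hx : x ∈ X.grading i) : X.proj i x = x :=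
  DirectSum.decompose_of_mem_same X.grading hx

theorem proj_of_mem_of_ne {i j : ℤ} {x : A} (hx : x ∈ X.grading j) (hij : j ≠ i) :
    X.proj i x = 0 :=
  DirectSum.decompose_of_mem_ne X.grading hx hij

@[elab_as_elim]
theorem induction_on {motive : A → Prop} (zero : motive 0)
    (homogeneous : ∀ i, ∀ x ∈ X.grading i, motive x)
    (add : ∀ x y, motive x → motive y → motive (x + y)) (x : A) : motive x :=
  DirectSum.Decomposition.inductionOn X.grading zero (fun x => homogeneous _ x x.2) add x

theorem d_proj (i : ℤ) (x : A) : X.d (X.proj i x) = X.proj (i + 1) (X.d x) := by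
  induction x using X.induction_on with
  | zero => simp
  | homogeneous j x hx =>
    by_cases h : j = i
    · subst h
      rw [X.proj_of_mem hx, X.proj_of_mem (X.d_degree _ x hx)]
    · rw [X.proj_of_mem_of_ne hx h, X.proj_of_mem_of_ne (X.d_degree _ x hx) (by omega), map_zero]
  | add x y hx hy => simp only [map_add, hx, hy]

theorem proj_mem_of_isGradedSubspace {B : Submodule ℝ A} (hB : X.IsGradedSubspace B) {x : A}
    (hx : x ∈ B) (i : ℤ) : X.proj i x ∈ B := by
  refine Submodule.iSup_induction (motive := fun x => X.proj i x ∈ B) _ (hB x hx)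
    (fun j y hy => ?_) (by simp) (fun a b ha hb => by simpa only [map_add] using B.add_mem ha hb)
  by_cases h : j = i
  · subst h
    rw [X.proj_of_mem hy.2]
    exact hy.1
  · rw [X.proj_of_mem_of_ne hy.2 h]
    exact B.zero_mem

theorem mem_of_forall_proj_mem {B : Submodule ℝ A} {x : A} (h : ∀ i, X.proj i x ∈ B) :
    x ∈ B := by
  classical
  rw [← DirectSum.sum_support_decompose X.grading x]
  exact B.sum_mem fun i _ => h i

theorem pair_proj_right {i : ℤ} {x : A} (hx : x ∈ X.grading i) (y : A) :
    X.pair x y = X.pair x (X.proj (X.n - i) y) := by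
  induction y using X.induction_on with
  | zero => simp
  | homogeneous j y hy =>
    by_cases h : j = X.n - i
    · rw [X.proj_of_mem (h ▸ hy)]
    · rw [X.proj_of_mem_of_ne hy h, map_zero, X.pair_degree i j (by omega) x hx y hy]
  | add y y' hy hy' => simp only [map_add, hy, hy']

theorem pair_proj_left {j : ℤ} {y : A} (hy : y ∈ X.grading j) (x : A) :
    X.pair x y = X.pair (X.proj (X.n - j) x) y := by
  induction x using X.induction_on with
  | zero => simp
  | homogeneous i x hx =>
    by_cases h : i = X.n - j
    · rw [X.proj_of_mem (h ▸ hx)]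
    · rw [X.proj_of_mem_of_ne hx h, map_zero, X.pair_degree i j (by omega) x hx y hy,
        LinearMap.zero_apply]
  | add x x' hx hx' => simp only [map_add, LinearMap.add_apply, hx, hx']

theorem pair_comm_of_mem_left {j : ℤ} {y : A} (hy : y ∈ X.grading j) (x : A) :
    X.pair y x = (-1 : ℝ) ^ (j * (X.n - j)) * X.pair x y := by
  rw [X.pair_proj_right hy, X.pair_proj_left hy,
    X.pair_symm j (X.n - j) y hy _ (X.proj_mem _ x)]

theorem pair_comm_of_mem_right {j : ℤ} {y : A} (hy : y ∈ X.grading j) (x : A) :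
    X.pair x y = (-1 : ℝ) ^ ((X.n - j) * j) * X.pair y x := by
  rw [X.pair_proj_right hy, X.pair_proj_left hy,
    X.pair_symm (X.n - j) j _ (X.proj_mem _ x) y hy]

theorem pair_d_left_eq_zero {y : A} (hy : X.d y = 0) (z : A) : X.pair (X.d z) y = 0 := by
  induction z using X.induction_on with
  | zero => simp
  | homogeneous i z hz => rw [X.pair_d i z hz, hy, map_zero, mul_zero]
  | add z z' hz hz' => simp only [map_add, LinearMap.add_apply, hz, hz', add_zero]

theorem pair_d_right_eq_zero {y : A} (hy : X.d y = 0) (z : A) : X.pair y (X.d z) = 0 := by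
  induction z using X.induction_on with
  | zero => simp
  | homogeneous i z hz =>
    rw [X.pair_comm_of_mem_right (X.d_degree i z hz), X.pair_d_left_eq_zero hy, mul_zero]
  | add z z' hz hz' => simp only [map_add, hz, hz', add_zero]

theorem pair_eq_zero_of_mem_perp {B : Submodule ℝ A} (hB : X.IsGradedSubspace B) {u c : A}
    (hu : u ∈ B) (hc : c ∈ X.perp B) : X.pair u c = 0 := by
  refine Submodule.iSup_induction (motive := fun u => X.pair u c = 0) _ (hB u hu)
    (fun j v hv => ?_) (by simp)
    (fun a b ha hb => by simp only [map_add, LinearMap.add_apply, ha, hb, add_zero])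
  rw [X.pair_comm_of_mem_left hv.2, hc v hv.1, mul_zero]

theorem isSymmetric_projection {p q : Submodule ℝ A} (hpq : IsCompl p q)
    (hp : ∀ u ∈ p, ∀ v ∈ q, X.pair u v = 0) (hq : ∀ v ∈ q, ∀ u ∈ p, X.pair v u = 0) :
    X.IsSymmetric (p.projection q hpq) := by
  intro x y
  set π := p.projection q hpq
  have hx : X.pair (x - π x) (π y) = 0 := hq _ (Submodule.sub_projection_mem hpq x) _
    (Submodule.projection_apply_mem hpq y)
  have hy : X.pair (π x) (y - π y) = 0 := hp _ (Submodule.projection_apply_mem hpq x) _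
    (Submodule.sub_projection_mem hpq y)
  rw [map_sub, LinearMap.sub_apply, sub_eq_zero] at hx
  rw [map_sub, sub_eq_zero] at hy
  rw [hy, hx]

end PairedComplex

namespace PairedComplex

variable {A : Type*} [AddCommGroup A] [Module ℝ A] {X : PairedComplex A}

theorem Perfect.eq_of_pair_eq (hperf : X.Perfect) {x y : A}
    (h : ∀ z, X.pair x z = X.pair y z) : x = y :=
  sub_eq_zero.1 <| hperf.1 _ fun z => by simp [h z]

theorem Perfect.d_eq_zero_of_pair_d_eq_zero (hperf : X.Perfect) {i : ℤ} {x : A}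
    (hx : x ∈ X.grading i) (h : ∀ z, X.pair x (X.d z) = 0) : X.d x = 0 :=
  hperf.1 _ fun z => by rw [X.pair_d i x hx, h, mul_zero]

theorem Perfect.mem_range_d_of_mem_perp_of_mem_grading (hperf : X.Perfect) {i : ℤ} {x : A}
    (hx : x ∈ X.grading i) (h : x ∈ X.perp (LinearMap.ker X.d)) : x ∈ LinearMap.range X.d := by
  obtain ⟨Ψ, hΨ⟩ := LinearMap.exists_comp_eq_of_ker_le X.d (X.pair x) h
  obtain ⟨w, hw, hwΨ⟩ := hperf.2 (i - 1) (Ψ ∘ₗ (X.grading (X.n - (i - 1))).subtype)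
  have hdw : ∀ z, X.pair w (X.d z) = X.pair x z := fun z => by
    have hdz := X.d_degree _ _ (X.proj_mem (X.n - i) z)
    rw [show X.n - i + 1 = X.n - (i - 1) by ring] at hdz
    rw [X.pair_proj_right hw, ← show X.n - i + 1 = X.n - (i - 1) by ring, ← X.d_proj,
      hwΨ ⟨_, hdz⟩, LinearMap.comp_apply, Submodule.subtype_apply, ← LinearMap.comp_apply, hΨ,
      ← X.pair_proj_right hx]
  refine ⟨(-1 : ℝ) ^ i • w, hperf.eq_of_pair_eq fun z => ?_⟩
  rw [map_smul, map_smul, LinearMap.smul_apply, X.pair_d _ w hw, hdw, smul_eq_mul, ← mul_assoc,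
    show 1 + (i - 1) = i by ring, ← mul_zpow]
  norm_num

theorem Perfect.perp_ker_d_le_range_d (hperf : X.Perfect) :
    X.perp (LinearMap.ker X.d) ≤ LinearMap.range X.d := fun x hx =>
  X.mem_of_forall_proj_mem fun i => hperf.mem_range_d_of_mem_perp_of_mem_grading
    (X.proj_mem i x) fun k hk => by
      have hk' : X.proj (X.n - i) k ∈ LinearMap.ker X.d := by
        rw [LinearMap.mem_ker, X.d_proj, LinearMap.mem_ker.1 hk, map_zero]
      have hswap := X.pair_proj_left (X.proj_mem (X.n - i) k) x
      rw [sub_sub_cancel] at hswap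
      rw [X.pair_proj_right (X.proj_mem i x), ← hswap]
      exact hx _ hk'

end PairedComplex

namespace PairedComplex.IsHarmonic

variable {A : Type*} [AddCommGroup A] [Module ℝ A] {X : PairedComplex A} {H : Submodule ℝ A}

theorem d_eq_zero (hH : X.IsHarmonic H) {x : A} (hx : x ∈ H) : X.d x = 0 := hH.2.1 hx

theorem exists_add_d_of_d_eq_zero (hH : X.IsHarmonic H) {x : A} (hx : X.d x = 0) :
    ∃ h ∈ H, ∃ z, h + X.d z = x := by
  have hx : x ∈ H ⊔ LinearMap.range X.d := hH.2.2.2 ▸ hx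
  obtain ⟨h, hh, _, ⟨z, rfl⟩, rfl⟩ := Submodule.mem_sup.1 hx
  exact ⟨h, hh, z, rfl⟩

theorem eq_zero_of_mem_range_d (hH : X.IsHarmonic H) {x : A} (hx : x ∈ H)
    (hdx : x ∈ LinearMap.range X.d) : x = 0 :=
  (Submodule.mem_bot ℝ).1 (hH.2.2.1 ▸ ⟨hx, hdx⟩)

theorem isSubcomplex (hH : X.IsHarmonic H) : X.IsSubcomplex H :=
  ⟨hH.1, fun _ hx => hH.d_eq_zero hx ▸ H.zero_mem⟩

theorem inclQuasiIso (hH : X.IsHarmonic H) : X.InclQuasiIso H := by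
  refine ⟨fun x hx => ?_, fun b hb _ ⟨z, hz⟩ => ⟨0, H.zero_mem, ?_⟩⟩
  · obtain ⟨h, hh, z, rfl⟩ := hH.exists_add_d_of_d_eq_zero hx
    exact ⟨h, hh, hH.d_eq_zero hh, z, add_sub_cancel_left h _⟩
  · rw [map_zero, hH.eq_zero_of_mem_range_d hb ⟨z, hz.symm⟩]

theorem exists_add_d_of_mem_grading (hH : X.IsHarmonic H) {i : ℤ} {x : A}
    (hxi : x ∈ X.grading i) (hx : X.d x = 0) :
    ∃ h ∈ H ⊓ X.grading i, ∃ z, h + X.d z = x := by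
  obtain ⟨h, hh, z, rfl⟩ := hH.exists_add_d_of_d_eq_zero hx
  refine ⟨X.proj i h, ⟨X.proj_mem_of_isGradedSubspace hH.1 hh i, X.proj_mem i h⟩,
    X.proj (i - 1) z, ?_⟩
  rw [X.d_proj, sub_add_cancel, ← map_add, X.proj_of_mem hxi]

theorem range_d_le_perp (hH : X.IsHarmonic H) : LinearMap.range X.d ≤ X.perp H := by
  rintro _ ⟨z, rfl⟩ b hb
  exact X.pair_d_left_eq_zero (hH.d_eq_zero hb) z

theorem inf_perp_eq_bot (hperf : X.Perfect) (hH : X.IsHarmonic H) : H ⊓ X.perp H = ⊥ := by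
  refine eq_bot_iff.2 fun x ⟨hx, hxH⟩ => hH.eq_zero_of_mem_range_d hx <|
    hperf.perp_ker_d_le_range_d fun k hk => ?_
  obtain ⟨h, hh, z, rfl⟩ := hH.exists_add_d_of_d_eq_zero hk
  rw [map_add, hxH h hh, X.pair_d_right_eq_zero (hH.d_eq_zero hx), add_zero]

theorem exists_mem_pair_eq (hperf : X.Perfect) (hH : X.IsHarmonic H) (i : ℤ)
    (φ : ↥(H ⊓ X.grading (X.n - i)) →ₗ[ℝ] ℝ) :
    ∃ x ∈ H ⊓ X.grading i, ∀ y : ↥(H ⊓ X.grading (X.n - i)), X.pair x (y : A) = φ y := by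
  have hdisj : Disjoint (H ⊓ X.grading (X.n - i)) (LinearMap.range X.d) :=
    disjoint_iff.2 (eq_bot_iff.2 fun x ⟨⟨hx, _⟩, hdx⟩ => hH.eq_zero_of_mem_range_d hx hdx)
  obtain ⟨Φ, hΦ, hΦd⟩ := LinearMap.exists_extend_of_disjoint hdisj φ
  obtain ⟨x, hxi, hxΦ⟩ := hperf.2 i (Φ ∘ₗ (X.grading (X.n - i)).subtype)
  have hdx : X.d x = 0 := hperf.d_eq_zero_of_pair_d_eq_zero hxi fun z => by
    have hdz := X.d_degree _ _ (X.proj_mem (X.n - i - 1) z)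
    rw [sub_add_cancel] at hdz
    rw [X.pair_proj_right hxi, ← sub_add_cancel (X.n - i) 1, ← X.d_proj,
      hxΦ ⟨_, hdz⟩]
    exact hΦd ⟨_, rfl⟩
  obtain ⟨h, hh, z, rfl⟩ := hH.exists_add_d_of_mem_grading hxi hdx
  refine ⟨h, hh, fun y => ?_⟩
  have hyΦ := hxΦ ⟨y, y.2.2⟩
  rw [map_add, LinearMap.add_apply, X.pair_d_left_eq_zero (hH.d_eq_zero y.2.1), add_zero]
    at hyΦ
  rw [hyΦ, ← hΦ]
  rfl

theorem subPerfect (hperf : X.Perfect) (hH : X.IsHarmonic H) : X.SubPerfect H :=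
  ⟨fun _ hx hxH => (Submodule.mem_bot ℝ).1 (hH.inf_perp_eq_bot hperf ▸ ⟨hx, hxH⟩),
    hH.exists_mem_pair_eq hperf⟩

theorem exists_sub_mem_perp_of_mem_grading (hperf : X.Perfect) (hH : X.IsHarmonic H) {i : ℤ}
    {a : A} (ha : a ∈ X.grading i) : ∃ h ∈ H ⊓ X.grading i, a - h ∈ X.perp H := by
  obtain ⟨h, hh, hha⟩ :=
    hH.exists_mem_pair_eq hperf i (X.pair a ∘ₗ (H ⊓ X.grading (X.n - i)).subtype)
  refine ⟨h, hh, fun b hb => ?_⟩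
  have hb' : X.proj (X.n - i) b ∈ H ⊓ X.grading (X.n - i) :=
    ⟨X.proj_mem_of_isGradedSubspace hH.1 hb _, X.proj_mem _ b⟩
  rw [X.pair_proj_right (sub_mem ha hh.2), map_sub, LinearMap.sub_apply, hha ⟨_, hb'⟩]
  exact sub_self _

theorem sup_perp_eq_top (hperf : X.Perfect) (hH : X.IsHarmonic H) : H ⊔ X.perp H = ⊤ := by
  refine Submodule.eq_top_iff'.2 fun a => ?_
  induction a using X.induction_on with
  | zero => exact zero_mem _
  | homogeneous i a ha =>
    obtain ⟨h, hh, hah⟩ := hH.exists_sub_mem_perp_of_mem_grading hperf ha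
    exact Submodule.mem_sup.2 ⟨h, hh.1, a - h, hah, add_sub_cancel h a⟩
  | add a b ha hb => exact add_mem ha hb

theorem isCompl_perp (hperf : X.Perfect) (hH : X.IsHarmonic H) : IsCompl H (X.perp H) :=
  ⟨disjoint_iff.2 (hH.inf_perp_eq_bot hperf), codisjoint_iff.2 (hH.sup_perp_eq_top hperf)⟩

theorem isProjection_projection (hperf : X.Perfect) (hH : X.IsHarmonic H) :
    X.IsProjection (H.projection (X.perp H) (hH.isCompl_perp hperf)) := by
  set hc := hH.isCompl_perp hperf
  refine ⟨⟨fun i a ha => ?_, fun x => ?_⟩, fun x => Submodule.projection_apply_of_mem_left hc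
    (Submodule.projection_apply_mem hc x)⟩
  · obtain ⟨h, hh, hah⟩ := hH.exists_sub_mem_perp_of_mem_grading hperf ha
    rw [← add_sub_cancel h a, map_add, Submodule.projection_apply_of_mem_left hc hh.1,
      Submodule.projection_apply_of_mem_right hc hah, add_zero, add_zero]
    exact hh.2
  · rw [Submodule.projection_apply_of_mem_right hc (hH.range_d_le_perp ⟨x, rfl⟩),
      hH.d_eq_zero (Submodule.projection_apply_mem hc x)]

end PairedComplex.IsHarmonic

section Statements

variable {A B : Type*} [AddCommGroup A] [Module ℝ A] [AddCommGroup B] [Module ℝ B]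
/-- harmonic subspaces of a cyclic cochain complex are quasi-isomorphic
cyclic subcomplexes and admit a unique symmetric projection, which is harmonic. -/
theorem stmt3 (X : PairedComplex A) (hperf : X.Perfect)
    (H : Submodule ℝ A) (hH : X.IsHarmonic H) :
    (X.IsSubcomplex H ∧ X.SubPerfect H) ∧
    X.InclQuasiIso H ∧
    (H ⊓ X.perp H = ⊥ ∧ H ⊔ X.perp H = ⊤) ∧
    (∃! π : A →ₗ[ℝ] A, X.IsProjection π ∧ X.IsSymmetric π ∧
        LinearMap.range π = H ∧ LinearMap.ker π = X.perp H) ∧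
    (∀ π : A →ₗ[ℝ] A, X.IsProjection π → X.IsSymmetric π →
        LinearMap.range π = H → LinearMap.ker π = X.perp H →
        LinearMap.range X.d ≤ LinearMap.ker π ∧ ∀ x : A, π (X.d x) = 0 ∧ X.d (π x) = 0) := by
  have hc := hH.isCompl_perp hperf
  have hproj := hH.isProjection_projection hperf
  have hsymm : X.IsSymmetric (H.projection (X.perp H) hc) :=
    X.isSymmetric_projection hc (fun _ hu _ hv => X.pair_eq_zero_of_mem_perp hH.1 hu hv)
      (fun _ hv _ hu => hv _ hu)
  refine ⟨⟨hH.isSubcomplex, hH.subPerfect hperf⟩, hH.inclQuasiIso, ⟨hc.inf_eq_bot, hc.sup_eq_top⟩,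
    ⟨_, ⟨hproj, hsymm, Submodule.range_projection hc, Submodule.ker_projection hc⟩,
      fun π ⟨hπ, _, hrange, hker⟩ => ?_⟩, fun π _ _ hrange hker => ?_⟩
  · refine (LinearMap.IsIdempotentElem.ext (LinearMap.ext hπ.2)
      (LinearMap.ext hproj.2) ⟨?_, ?_⟩) <;> simp [hrange, hker]
  · have hd : LinearMap.range X.d ≤ LinearMap.ker π := hker ▸ hH.range_d_le_perp
    exact ⟨hd, fun x => ⟨hd ⟨x, rfl⟩, hH.d_eq_zero (hrange ▸ ⟨x, rfl⟩)⟩⟩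

end Statements
end
end

section
/- Every cyclic cochain complex is of Hodge type, i.e. every cochain complex (A,d) with a perfect pairing ⟨·,·⟩ of degree n admits a Hodge decomposition A = H ⊕ im d ⊕ C. -/
/-!
Work degree by degree, pairing `Aⁱ` with `Aⁿ⁻ⁱ`. Perfectness gives two facts: an element
orthogonal to the coboundaries is closed, and one orthogonal to the cocycles is exact.
Take `Hⁱ` to be any complement of the coboundaries `Bⁱ` in the cocycles `Zⁱ`. Representing
the functional that is `⟨x, ·⟩` on `Hⁿ⁻ⁱ` and vanishes on `Bⁿ⁻ⁱ` by a (hence closed) element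
of `Aⁱ` shows `Aⁱ = Hⁱ + (Hⁿ⁻ⁱ)^⊥`, so some complement `C'ⁱ` of `Zⁱ` is orthogonal to `Hⁿ⁻ⁱ`. Replacing each `c ∈ C'ⁱ` by `c + b`,
where the coboundary `b` represents `-½ ⟨c, ·⟩` on `C'ⁿ⁻ⁱ`, makes the complement isotropic.
Since `ker d` and `im d` are graded, the sums over all degrees form a Hodge decomposition.
-/

noncomputable section

theorem exists_le_disjoint_sup_eq_sup {α : Type*} [Lattice α] [BoundedOrder α]
    [IsModularLattice α] [ComplementedLattice α] (a b : α) :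
    ∃ c ≤ a, Disjoint c b ∧ c ⊔ b = a ⊔ b := by
  obtain ⟨c, hdisj, hsup⟩ := IsModularLattice.exists_disjoint_and_sup_eq (inf_le_left : a ⊓ b ≤ a)
  have hca : c ≤ a := hsup ▸ le_sup_right
  refine ⟨c, hca, ?_, le_antisymm (sup_le_sup_right hca b) ?_⟩
  · rw [disjoint_iff, ← inf_eq_left.mpr hca, inf_assoc, inf_comm]
    exact hdisj.eq_bot
  · calc a ⊔ b = (a ⊓ b) ⊔ c ⊔ b := by rw [hsup]
      _ ≤ c ⊔ b := sup_le (sup_le (inf_le_right.trans le_sup_right) le_sup_left) le_sup_right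

theorem Submodule.exists_linearMap_eq_on_of_disjoint {K V W : Type*} [DivisionRing K]
    [AddCommGroup V] [Module K V] [AddCommGroup W] [Module K W] {S T : Submodule K V}
    (hST : Disjoint S T) (f : V →ₗ[K] W) :
    ∃ g : V →ₗ[K] W, (∀ x ∈ S, g x = f x) ∧ ∀ x ∈ T, g x = 0 := by
  obtain ⟨L, hTL, hLS⟩ := hST.symm.exists_isCompl
  refine ⟨f ∘ₗ S.subtype ∘ₗ S.projectionOnto L hLS.symm, fun x hx => ?_, fun x hx => ?_⟩
  · simp [Submodule.projectionOnto_apply_left hLS.symm ⟨x, hx⟩]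
  · simp [Submodule.projectionOnto_apply_right hLS.symm ⟨x, hTL hx⟩]

namespace DirectSum

variable {ι R M : Type*} [DecidableEq ι] [Semiring R] [AddCommMonoid M] [Module R M]
  {𝒜 : ι → Submodule R M}

theorem decompose_mem_of_mem_iSup [Decomposition 𝒜] {S : ι → Submodule R M}
    (hS : ∀ i, S i ≤ 𝒜 i) {x : M} (hx : x ∈ ⨆ i, S i) (i : ι) :
    (decompose 𝒜 x i : M) ∈ S i := by
  induction hx using Submodule.iSup_induction' with
  | mem k y hy =>
    obtain rfl | hki := eq_or_ne k i
    · rwa [decompose_of_mem_same 𝒜 (hS k hy)]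
    · rw [decompose_of_mem_ne 𝒜 (hS k hy) hki]
      exact zero_mem _
  | zero => simp
  | add y z _ _ hy hz => simpa using add_mem hy hz

theorem decompose_apply_of_mapsTo [Decomposition 𝒜] [Add ι] [IsRightCancelAdd ι]
    {f : M →ₗ[R] M} {k : ι} (hf : ∀ i, ∀ x ∈ 𝒜 i, f x ∈ 𝒜 (i + k)) (x : M) (i : ι) :
    (decompose 𝒜 (f x) (i + k) : M) = f (decompose 𝒜 x i) := by
  induction x using Decomposition.inductionOn 𝒜 with
  | zero => simp
  | @homogeneous l m =>
    obtain rfl | hli := eq_or_ne l i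
    · rw [decompose_of_mem_same 𝒜 (hf l m m.2), decompose_of_mem_same 𝒜 m.2]
    · rw [decompose_of_mem_ne 𝒜 (hf l m m.2) (fun h => hli (add_right_cancel h)),
        decompose_of_mem_ne 𝒜 m.2 hli, map_zero]
  | add y z hy hz => simp [hy, hz]

namespace IsInternal

theorem iSup_inf_iSup (h : IsInternal 𝒜) {S T : ι → Submodule R M} (hS : ∀ i, S i ≤ 𝒜 i)
    (hT : ∀ i, T i ≤ 𝒜 i) : (⨆ i, S i) ⊓ ⨆ i, T i = ⨆ i, S i ⊓ T i := by
  classical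
  let := h.chooseDecomposition
  refine le_antisymm (fun x hx => ?_) (iSup_le fun i => inf_le_inf (le_iSup S i) (le_iSup T i))
  rw [← sum_support_decompose 𝒜 x]
  exact sum_mem fun i _ => Submodule.mem_iSup_of_mem i
    ⟨decompose_mem_of_mem_iSup hS hx.1 i, decompose_mem_of_mem_iSup hT hx.2 i⟩

theorem ker_eq_iSup_ker_inf [Add ι] [IsRightCancelAdd ι] (h : IsInternal 𝒜) {f : M →ₗ[R] M}
    {k : ι} (hf : ∀ i, ∀ x ∈ 𝒜 i, f x ∈ 𝒜 (i + k)) :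
    LinearMap.ker f = ⨆ i, LinearMap.ker f ⊓ 𝒜 i := by
  classical
  let := h.chooseDecomposition
  refine le_antisymm (fun x hx => ?_) (iSup_le fun i => inf_le_left)
  rw [← sum_support_decompose 𝒜 x]
  refine sum_mem fun i _ => Submodule.mem_iSup_of_mem i
    (Submodule.mem_inf.mpr ⟨?_, (decompose 𝒜 x i).2⟩)
  rw [LinearMap.mem_ker, ← decompose_apply_of_mapsTo hf, LinearMap.mem_ker.mp hx]
  simp

theorem range_eq_iSup_range_inf [Add ι] (h : IsInternal 𝒜) {f : M →ₗ[R] M} {k : ι}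
    (hf : ∀ i, ∀ x ∈ 𝒜 i, f x ∈ 𝒜 (i + k)) :
    LinearMap.range f = ⨆ i, LinearMap.range f ⊓ 𝒜 i := by
  refine le_antisymm ?_ (iSup_le fun i => inf_le_left)
  calc LinearMap.range f = ⨆ i, (𝒜 i).map f := by
        rw [LinearMap.range_eq_map, ← h.submodule_iSup_eq_top, Submodule.map_iSup]
    _ ≤ ⨆ i, LinearMap.range f ⊓ 𝒜 i := iSup_le fun i => le_iSup_of_le (i + k) <| by
        rintro _ ⟨x, hx, rfl⟩
        exact ⟨LinearMap.mem_range_self f x, hf i x hx⟩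

end IsInternal

end DirectSum

namespace PairedComplex

variable {A : Type*} [AddCommGroup A] [Module ℝ A] (X : PairedComplex A)

lemma mem_iSup_grading (x : A) : x ∈ ⨆ i, X.grading i := by
  rw [X.internal.submodule_iSup_eq_top]
  trivial

def cocycles (i : ℤ) : Submodule ℝ A := LinearMap.ker X.d ⊓ X.grading i

def coboundaries (i : ℤ) : Submodule ℝ A := LinearMap.range X.d ⊓ X.grading i

lemma cocycles_le_grading (i : ℤ) : X.cocycles i ≤ X.grading i := inf_le_right

lemma coboundaries_le_grading (i : ℤ) : X.coboundaries i ≤ X.grading i := inf_le_right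

lemma coboundaries_le_cocycles (i : ℤ) : X.coboundaries i ≤ X.cocycles i :=
  inf_le_inf_right _ (LinearMap.range_le_ker_iff.mpr (LinearMap.ext X.d_sq))

lemma iSup_cocycles : ⨆ i, X.cocycles i = LinearMap.ker X.d :=
  (X.internal.ker_eq_iSup_ker_inf X.d_degree).symm

lemma iSup_coboundaries : ⨆ i, X.coboundaries i = LinearMap.range X.d :=
  (X.internal.range_eq_iSup_range_inf X.d_degree).symm

lemma isGradedSubspace_iSup {S : ℤ → Submodule ℝ A} (hS : ∀ i, S i ≤ X.grading i) :
    X.IsGradedSubspace (⨆ i, S i) := fun _ hx =>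
  iSup_mono (fun i => le_inf (le_iSup S i) (hS i)) hx

lemma pair_eq_zero_of_mem_iSup {S : ℤ → Submodule ℝ A} (hS : ∀ k, S k ≤ X.grading k)
    {i : ℤ} {x : A} (hx : x ∈ X.grading i) (h : ∀ y ∈ S (X.n - i), X.pair x y = 0)
    {y : A} (hy : y ∈ ⨆ k, S k) : X.pair x y = 0 := by
  suffices ⨆ k, S k ≤ LinearMap.ker (X.pair x) from this hy
  refine iSup_le fun k z hz => ?_
  obtain rfl | hk := eq_or_ne k (X.n - i)
  · exact h z hz
  · exact X.pair_degree i k (by omega) x hx z (hS k hz)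

lemma pair_eq_zero_of_mem_iSup_of_mem_iSup {S T : ℤ → Submodule ℝ A}
    (hS : ∀ k, S k ≤ X.grading k) (hT : ∀ k, T k ≤ X.grading k)
    (h : ∀ i, ∀ x ∈ S i, ∀ y ∈ T (X.n - i), X.pair x y = 0) {x y : A} (hx : x ∈ ⨆ i, S i)
    (hy : y ∈ ⨆ i, T i) : X.pair x y = 0 := by
  induction hx using Submodule.iSup_induction' with
  | mem i x hx => exact X.pair_eq_zero_of_mem_iSup hT (hS i hx) (h i x hx) hy
  | zero => simp
  | add x x' _ _ hx hx' => simp [hx, hx']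

lemma pair_eq_zero_of_mem_range_of_mem_ker {b z : A} (hb : b ∈ LinearMap.range X.d)
    (hz : z ∈ LinearMap.ker X.d) : X.pair b z = 0 := by
  obtain ⟨y, rfl⟩ := hb
  induction X.mem_iSup_grading y using Submodule.iSup_induction' with
  | mem i y hy => rw [X.pair_d i y hy, LinearMap.mem_ker.mp hz, map_zero, mul_zero]
  | zero => simp
  | add y y' _ _ hy hy' => simp [hy, hy']

lemma eq_zero_of_forall_pair_eq_zero (hnd : X.Nondegenerate) {i : ℤ} {x : A}
    (hx : x ∈ X.grading i) (h : ∀ y ∈ X.grading (X.n - i), X.pair x y = 0) : x = 0 :=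
  hnd x fun y => X.pair_eq_zero_of_mem_iSup (fun _ => le_rfl) hx h (X.mem_iSup_grading y)

lemma d_eq_zero_of_forall_pair_coboundaries (hnd : X.Nondegenerate) {i : ℤ} {x : A}
    (hx : x ∈ X.grading i) (h : ∀ b ∈ X.coboundaries (X.n - i), X.pair x b = 0) :
    X.d x = 0 := by
  refine X.eq_zero_of_forall_pair_eq_zero hnd (X.d_degree i x hx) fun y hy => ?_
  have hdy : X.d y ∈ X.grading (X.n - i) := by
    convert X.d_degree _ y hy using 2
    ring
  rw [X.pair_d i x hx, h _ ⟨LinearMap.mem_range_self _ y, hdy⟩, mul_zero]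

variable {X}

lemma Perfect.exists_pair_eq (hperf : X.Perfect) (i : ℤ) (φ : Module.Dual ℝ A) :
    ∃ x ∈ X.grading i, ∀ y ∈ X.grading (X.n - i), X.pair x y = φ y := by
  obtain ⟨x, hx, hxφ⟩ := hperf.2 i (φ ∘ₗ (X.grading (X.n - i)).subtype)
  exact ⟨x, hx, fun y hy => hxφ ⟨y, hy⟩⟩

lemma Perfect.exists_pair_eq_on_of_disjoint (hperf : X.Perfect) {i : ℤ} {S T : Submodule ℝ A}
    (hS : S ≤ X.grading (X.n - i)) (hT : T ≤ X.grading (X.n - i)) (hST : Disjoint S T)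
    (φ : Module.Dual ℝ A) :
    ∃ x ∈ X.grading i, (∀ y ∈ S, X.pair x y = φ y) ∧ ∀ y ∈ T, X.pair x y = 0 := by
  obtain ⟨ψ, hψS, hψT⟩ := Submodule.exists_linearMap_eq_on_of_disjoint hST φ
  obtain ⟨x, hx, hxψ⟩ := hperf.exists_pair_eq i ψ
  exact ⟨x, hx, fun y hy => (hxψ y (hS hy)).trans (hψS y hy),
    fun y hy => (hxψ y (hT hy)).trans (hψT y hy)⟩

lemma Perfect.mem_range_d_of_forall_pair_cocycles (hperf : X.Perfect) {i : ℤ} {x : A}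
    (hx : x ∈ X.grading i) (h : ∀ z ∈ X.cocycles (X.n - i), X.pair x z = 0) :
    x ∈ LinearMap.range X.d := by
  have hker : X.pair x ∈ (LinearMap.ker X.d).dualAnnihilator := by
    refine (Submodule.mem_dualAnnihilator _).mpr fun z hz => ?_
    rw [← X.iSup_cocycles] at hz
    exact X.pair_eq_zero_of_mem_iSup X.cocycles_le_grading hx h hz
  rw [← LinearMap.range_dualMap_eq_dualAnnihilator_ker] at hker
  obtain ⟨g, hg⟩ := hker
  -- the sign makes `d w` represent `⟨x, ·⟩`, compensating the sign in `pair_d`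
  obtain ⟨w, hw, hwg⟩ := hperf.exists_pair_eq (i - 1) ((-1 : ℝ) ^ i • g)
  refine ⟨w, sub_eq_zero.mp (X.eq_zero_of_forall_pair_eq_zero hperf.1 (sub_mem ?_ hx)
    fun y hy => ?_)⟩
  · simpa using X.d_degree (i - 1) w hw
  · have hdy : X.d y ∈ X.grading (X.n - (i - 1)) := by
      convert X.d_degree _ y hy using 2
      ring
    rw [map_sub, LinearMap.sub_apply, X.pair_d (i - 1) w hw, hwg _ hdy, ← hg,
      show 1 + (i - 1) = i by ring, LinearMap.smul_apply, smul_eq_mul, ← mul_assoc,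
      ← mul_zpow]
    norm_num

lemma Perfect.exists_compl_cocycles_perp (hperf : X.Perfect) {H : ℤ → Submodule ℝ A}
    (hBH : ∀ i, Disjoint (X.coboundaries i) (H i))
    (hBHZ : ∀ i, X.coboundaries i ⊔ H i = X.cocycles i) (i : ℤ) :
    ∃ C : Submodule ℝ A, Disjoint C (X.cocycles i) ∧ C ⊔ X.cocycles i = X.grading i ∧
      ∀ c ∈ C, ∀ h ∈ H (X.n - i), X.pair c h = 0 := by
  have hHZ (k : ℤ) : H k ≤ X.cocycles k := le_sup_right.trans (hBHZ k).le
  set W := X.grading i ⊓ X.perp (H (X.n - i))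
  have hAW : X.grading i ≤ H i ⊔ W := fun x hx => by
    obtain ⟨x', hx', hx'H, hx'B⟩ := hperf.exists_pair_eq_on_of_disjoint
      ((hHZ _).trans (X.cocycles_le_grading _)) (X.coboundaries_le_grading _)
      (hBH (X.n - i)).symm (X.pair x)
    have hx'Z : x' ∈ X.cocycles i :=
      ⟨X.d_eq_zero_of_forall_pair_coboundaries hperf.1 hx' hx'B, hx'⟩
    rw [← hBHZ i] at hx'Z
    obtain ⟨b, hb, h, hh, rfl⟩ := Submodule.mem_sup.mp hx'Z
    refine Submodule.mem_sup.mpr ⟨h, hh, x - h, ⟨sub_mem hx (hHZ i hh).2, fun h' hh' => ?_⟩,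
      add_sub_cancel _ _⟩
    have hxh : X.pair x h' = X.pair h h' := by
      rw [← hx'H h' hh', map_add, LinearMap.add_apply,
        X.pair_eq_zero_of_mem_range_of_mem_ker hb.1 (hHZ _ hh').1, zero_add]
    rw [map_sub, LinearMap.sub_apply, hxh, sub_self]
  obtain ⟨C, hCW, hCZ, hCWZ⟩ := exists_le_disjoint_sup_eq_sup W (X.cocycles i)
  refine ⟨C, hCZ, le_antisymm (sup_le (hCW.trans inf_le_left) (X.cocycles_le_grading i)) ?_,
    fun c hc => (hCW hc).2⟩
  calc X.grading i ≤ H i ⊔ W := hAW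
    _ ≤ X.cocycles i ⊔ W := sup_le_sup_right (hHZ i) W
    _ = C ⊔ X.cocycles i := by rw [hCWZ, sup_comm]

/-- The factor `-½` makes this isotropic: coboundaries pair trivially with each other and,
by graded symmetry, `⟨c₁ + b₁, c₂ + b₂⟩ = ⟨c₁, c₂⟩ - ½ ⟨c₁, c₂⟩ - ½ ⟨c₁, c₂⟩ = 0`. -/
def isotropicCorrection (C : ℤ → Submodule ℝ A) (i : ℤ) : Submodule ℝ A where
  carrier := {x | ∃ c ∈ C i, ∃ b ∈ X.coboundaries i, x = c + b ∧
    ∀ c' ∈ C (X.n - i), X.pair b c' = -(1 / 2) * X.pair c c'}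
  add_mem' := by
    rintro _ _ ⟨c, hc, b, hb, rfl, hbc⟩ ⟨c', hc', b', hb', rfl, hbc'⟩
    refine ⟨c + c', add_mem hc hc', b + b', add_mem hb hb', by abel, fun c'' hc'' => ?_⟩
    simp only [map_add, LinearMap.add_apply, hbc c'' hc'', hbc' c'' hc'']
    ring
  zero_mem' := ⟨0, zero_mem _, 0, zero_mem _, by simp, fun _ _ => by simp⟩
  smul_mem' := by
    rintro a _ ⟨c, hc, b, hb, rfl, hbc⟩
    refine ⟨a • c, Submodule.smul_mem _ a hc, a • b, Submodule.smul_mem _ a hb,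
      smul_add a c b, fun c' hc' => ?_⟩
    simp only [map_smul, LinearMap.smul_apply, hbc c' hc', smul_eq_mul]
    ring

variable {C : ℤ → Submodule ℝ A}

lemma Perfect.exists_coboundary_correction (hperf : X.Perfect) {i : ℤ}
    (hCZ : Disjoint (C (X.n - i)) (X.cocycles (X.n - i)))
    (hCA : C (X.n - i) ≤ X.grading (X.n - i)) (c : A) :
    ∃ b ∈ X.coboundaries i, ∀ c' ∈ C (X.n - i), X.pair b c' = -(1 / 2) * X.pair c c' := by
  obtain ⟨b, hb, hbC, hbZ⟩ :=
    hperf.exists_pair_eq_on_of_disjoint hCA (X.cocycles_le_grading _) hCZ (-(1 / 2 : ℝ) • X.pair c)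
  exact ⟨b, ⟨hperf.mem_range_d_of_forall_pair_cocycles hb hbZ, hb⟩,
    fun c' hc' => by simp [hbC c' hc']⟩

lemma Perfect.isotropicCorrection_sup_cocycles (hperf : X.Perfect)
    (hCZ : ∀ i, Disjoint (C i) (X.cocycles i))
    (hCZA : ∀ i, C i ⊔ X.cocycles i = X.grading i) (i : ℤ) :
    X.isotropicCorrection C i ⊔ X.cocycles i = X.grading i := by
  have hCA (k : ℤ) : C k ≤ X.grading k := le_sup_left.trans (hCZA k).le
  refine le_antisymm (sup_le ?_ (X.cocycles_le_grading i)) fun x hx => ?_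
  · rintro _ ⟨c, hc, b, hb, rfl, -⟩
    exact add_mem (hCA i hc) hb.2
  · rw [← hCZA i] at hx
    obtain ⟨c, hc, z, hz, rfl⟩ := Submodule.mem_sup.mp hx
    obtain ⟨b, hb, hbc⟩ := hperf.exists_coboundary_correction (hCZ _) (hCA _) c
    exact Submodule.mem_sup.mpr ⟨c + b, ⟨c, hc, b, hb, rfl, hbc⟩, z - b,
      sub_mem hz (X.coboundaries_le_cocycles i hb), by abel⟩

lemma disjoint_isotropicCorrection_cocycles (hnd : X.Nondegenerate)
    (hCZ : ∀ i, Disjoint (C i) (X.cocycles i))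
    (hCZA : ∀ i, C i ⊔ X.cocycles i = X.grading i) (i : ℤ) :
    Disjoint (X.isotropicCorrection C i) (X.cocycles i) := by
  refine Submodule.disjoint_def.mpr ?_
  rintro _ ⟨c, hc, b, hb, rfl, hbc⟩ hZ
  have hbZ := X.coboundaries_le_cocycles i hb
  obtain rfl : c = 0 :=
    Submodule.disjoint_def.mp (hCZ i) c hc (by simpa using sub_mem hZ hbZ)
  simp only [zero_add, map_zero, LinearMap.zero_apply, mul_zero] at hbc ⊢
  refine X.eq_zero_of_forall_pair_eq_zero hnd hb.2 fun y hy => ?_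
  rw [← hCZA] at hy
  obtain ⟨c', hc', z, hz, rfl⟩ := Submodule.mem_sup.mp hy
  rw [map_add, hbc c' hc', X.pair_eq_zero_of_mem_range_of_mem_ker hb.1 hz.1]
  simp

lemma pair_isotropicCorrection_eq_zero (hCA : ∀ i, C i ≤ X.grading i) {i : ℤ} {x y : A}
    (hx : x ∈ X.isotropicCorrection C i) (hy : y ∈ X.isotropicCorrection C (X.n - i)) :
    X.pair x y = 0 := by
  obtain ⟨c₁, hc₁, b₁, hb₁, rfl, hbc₁⟩ := hx
  obtain ⟨c₂, hc₂, b₂, hb₂, rfl, hbc₂⟩ := hy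
  rw [sub_sub_cancel] at hbc₂
  have hcb : X.pair c₁ b₂ = -(1 / 2) * X.pair c₁ c₂ := by
    rw [X.pair_symm i _ c₁ (hCA i hc₁) b₂ hb₂.2, hbc₂ c₁ hc₁,
      X.pair_symm i _ c₁ (hCA i hc₁) c₂ (hCA _ hc₂)]
    ring
  simp only [map_add, LinearMap.add_apply, hcb, hbc₁ c₂ hc₂,
    X.pair_eq_zero_of_mem_range_of_mem_ker hb₁.1 (X.coboundaries_le_cocycles _ hb₂).1]
  ring

lemma pair_isotropicCorrection_eq_zero_of_perp {H : Submodule ℝ A}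
    (hH : H ≤ LinearMap.ker X.d) {i : ℤ} (hCH : ∀ c ∈ C i, ∀ h ∈ H, X.pair c h = 0) {x h : A}
    (hx : x ∈ X.isotropicCorrection C i) (hh : h ∈ H) : X.pair x h = 0 := by
  obtain ⟨c, hc, b, hb, rfl, -⟩ := hx
  rw [map_add, LinearMap.add_apply, hCH c hc h hh,
    X.pair_eq_zero_of_mem_range_of_mem_ker hb.1 (hH hh), add_zero]

variable (X) in
lemma isHodge_iSup {H C : ℤ → Submodule ℝ A} (hBH : ∀ i, Disjoint (X.coboundaries i) (H i))
    (hBHZ : ∀ i, X.coboundaries i ⊔ H i = X.cocycles i)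
    (hCZ : ∀ i, Disjoint (C i) (X.cocycles i))
    (hCZA : ∀ i, C i ⊔ X.cocycles i = X.grading i)
    (hCC : ∀ i, ∀ c ∈ C i, ∀ c' ∈ C (X.n - i), X.pair c c' = 0)
    (hCH : ∀ i, ∀ c ∈ C i, ∀ h ∈ H (X.n - i), X.pair c h = 0) :
    X.IsHodge (⨆ i, H i) (⨆ i, C i) := by
  have hHZ (i : ℤ) : H i ≤ X.cocycles i := le_sup_right.trans (hBHZ i).le
  have hHA (i : ℤ) : H i ≤ X.grading i := (hHZ i).trans (X.cocycles_le_grading i)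
  have hCA (i : ℤ) : C i ≤ X.grading i := le_sup_left.trans (hCZA i).le
  refine ⟨le_top, le_top, X.isGradedSubspace_iSup hHA, X.isGradedSubspace_iSup hCA,
    iSup_le fun i => (hHZ i).trans inf_le_left, ?_, ?_, ?_, ?_,
    fun c hc c' hc' => X.pair_eq_zero_of_mem_iSup_of_mem_iSup hCA hCA hCC hc hc',
    fun c hc h hh => X.pair_eq_zero_of_mem_iSup_of_mem_iSup hCA hHA hCH hc hh⟩
  · rw [Submodule.map_top, ← X.iSup_coboundaries,
      X.internal.iSup_inf_iSup hHA X.coboundaries_le_grading]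
    exact iSup_eq_bot.mpr fun i => (hBH i).symm.eq_bot
  · rw [Submodule.map_top, inf_top_eq, ← X.iSup_coboundaries, ← iSup_sup_eq,
      ← X.iSup_cocycles]
    exact iSup_congr fun i => (sup_comm _ _).trans (hBHZ i)
  · rw [← X.iSup_cocycles, X.internal.iSup_inf_iSup hCA X.cocycles_le_grading]
    exact iSup_eq_bot.mpr fun i => (hCZ i).eq_bot
  · rw [inf_top_eq, ← X.iSup_cocycles, ← iSup_sup_eq, iSup_congr hCZA,
      X.internal.submodule_iSup_eq_top]

end PairedComplex

section Statements

variable {A B : Type*} [AddCommGroup A] [Module ℝ A] [AddCommGroup B] [Module ℝ B]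
/-- every cyclic cochain complex is of Hodge type. -/
theorem stmt7 (X : PairedComplex A) (hperf : X.Perfect) : X.IsHodgeType := by
  choose H hBH hBHZ using fun i =>
    IsModularLattice.exists_disjoint_and_sup_eq (X.coboundaries_le_cocycles i)
  choose C hCZ hCZA hCH using hperf.exists_compl_cocycles_perp hBH hBHZ
  have hCA (i : ℤ) : C i ≤ X.grading i := le_sup_left.trans (hCZA i).le
  have hHZ (i : ℤ) : H i ≤ LinearMap.ker X.d :=
    le_sup_right.trans ((hBHZ i).le.trans inf_le_left)
  exact ⟨_, _, X.isHodge_iSup hBH hBHZ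
    (X.disjoint_isotropicCorrection_cocycles hperf.1 hCZ hCZA)
    (hperf.isotropicCorrection_sup_cocycles hCZ hCZA)
    (fun _ _ hx _ hy => X.pair_isotropicCorrection_eq_zero hCA hx hy)
    (fun i _ hx _ hh => X.pair_isotropicCorrection_eq_zero_of_perp (hHZ _) (hCH i) hx hh)⟩

end Statements
end
end

section
/- Let (A,d,⟨·,·⟩) be a cochain complex with pairing. If A is of Hodge type and the induced pairing on the cohomology H(A) is nondegenerate, then the degenerate subspace A_deg ⊆ A is an acyclic subcomplex (its cohomology vanishes) and the quotient map π_Q : A → Q(A) onto the nondegenerate quotient is a quasi-isomorphism. -/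
noncomputable section

/-! Let `A = C ⊕ H ⊕ im d` be a Hodge decomposition. Since `C` is isotropic and orthogonal
to `H`, the functional `⟨c, ·⟩` of `c ∈ C` only sees the exact part, where
`⟨c, d b⟩ = ±⟨d c, b⟩`; so `c` is degenerate as soon as `d c` is. Hence every `x` with `d x`
degenerate lies in `A_deg + ker d`. Combined with the nondegeneracy of the cohomology pairing
(a degenerate cocycle is exact), this gives the acyclicity of `A_deg`, and both halves of
the quasi-isomorphism follow by lifting through the surjection with kernel `A_deg`. -/

namespace PairedComplex

variable {A : Type*} [AddCommGroup A] [Module ℝ A] (X : PairedComplex A)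

lemma apply_eq_zero_of_forall_grading {M : Type*} [AddCommGroup M] [Module ℝ M]
    (f : A →ₗ[ℝ] M) (h : ∀ i, ∀ x ∈ X.grading i, f x = 0) (a : A) : f a = 0 := by
  have hker : ⊤ ≤ LinearMap.ker f :=
    X.internal.submodule_iSup_eq_top ▸ iSup_le fun i x hx => h i x hx
  exact hker Submodule.mem_top

lemma pair_comm_of_mem_grading {j : ℤ} {y : A} (hy : y ∈ X.grading j) (a : A) :
    X.pair y a = (-1 : ℝ) ^ (j * (X.n - j)) * X.pair a y := by
  have key := X.apply_eq_zero_of_forall_grading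
    (X.pair y - (-1 : ℝ) ^ (j * (X.n - j)) • X.pair.flip y) ?_ a
  · simpa [sub_eq_zero] using key
  intro k x hx
  simp only [LinearMap.sub_apply, LinearMap.smul_apply, LinearMap.flip_apply, smul_eq_mul]
  by_cases hjk : j + k = X.n
  · obtain rfl : k = X.n - j := by omega
    rw [X.pair_symm j _ y hy x hx, sub_self]
  · rw [X.pair_degree j k hjk y hy x hx, X.pair_degree k j (by omega) x hx y hy, mul_zero,
      sub_zero]

lemma pair_eq_zero_comm {j : ℤ} {y : A} (hy : y ∈ X.grading j) (a : A) :
    X.pair y a = 0 ↔ X.pair a y = 0 := by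
  rw [X.pair_comm_of_mem_grading hy, mul_eq_zero, or_iff_right (zpow_ne_zero _ (by norm_num))]

lemma pair_d_eq_zero_iff {i : ℤ} {x : A} (hx : x ∈ X.grading i) (y : A) :
    X.pair (X.d x) y = 0 ↔ X.pair x (X.d y) = 0 := by
  rw [X.pair_d i x hx, mul_eq_zero, or_iff_right (zpow_ne_zero _ (by norm_num))]

lemma mem_degSub_iff {a : A} : a ∈ X.degSub ↔ ∀ y, X.pair a y = 0 :=
  ⟨fun h y => h y Submodule.mem_top, fun h y _ => h y⟩

lemma mem_degSub_iff_pair_right {a : A} : a ∈ X.degSub ↔ ∀ y, X.pair y a = 0 := by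
  rw [mem_degSub_iff]
  constructor
  · exact fun h => X.apply_eq_zero_of_forall_grading (X.pair.flip a)
      fun j y hy => (X.pair_eq_zero_comm hy a).mpr (h y)
  · exact fun h => X.apply_eq_zero_of_forall_grading (X.pair a)
      fun j y hy => (X.pair_eq_zero_comm hy a).mp (h y)

lemma d_mem_degSub {a : A} (ha : a ∈ X.degSub) : X.d a ∈ X.degSub :=
  X.mem_degSub_iff_pair_right.mpr <| X.apply_eq_zero_of_forall_grading (X.pair.flip (X.d a))
    fun _ _ hx => (X.pair_d_eq_zero_iff hx a).mp (X.mem_degSub_iff_pair_right.mp ha _)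

lemma pair_d_eq_zero_of_d_mem_degSub {x : A} (hx : X.d x ∈ X.degSub) (y : A) :
    X.pair x (X.d y) = 0 :=
  X.apply_eq_zero_of_forall_grading (X.pair x ∘ₗ X.d) (fun j y hy =>
    (X.pair_eq_zero_comm (X.d_degree j y hy) x).mp <|
      (X.pair_d_eq_zero_iff hy x).mpr (X.mem_degSub_iff_pair_right.mp hx y)) y

section Decomposition

open DirectSum

variable [Decomposition X.grading]

lemma isGradedSubspace_of_decompose_mem {B : Submodule ℝ A}
    (hB : ∀ a ∈ B, ∀ i, (decompose X.grading a i : A) ∈ B) : X.IsGradedSubspace B := by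
  classical
  intro a ha
  rw [← sum_support_decompose X.grading a]
  exact Submodule.sum_mem _ fun i _ =>
    Submodule.mem_iSup_of_mem i ⟨hB a ha i, SetLike.coe_mem _⟩

lemma pair_decompose {j : ℤ} {z : A} (hz : z ∈ X.grading j) (a : A) :
    X.pair a z = X.pair (decompose X.grading a (X.n - j)) z := by
  classical
  conv_lhs => rw [← sum_support_decompose X.grading a]
  rw [map_sum, LinearMap.sum_apply]
  refine Finset.sum_eq_single _ (fun i _ hi =>
    X.pair_degree i j (by omega) _ (SetLike.coe_mem _) z hz) fun hn => ?_
  rw [DFinsupp.notMem_support_iff.mp hn, ZeroMemClass.coe_zero, map_zero,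
    LinearMap.zero_apply]

lemma decompose_mem_degSub {a : A} (ha : a ∈ X.degSub) (k : ℤ) :
    (decompose X.grading a k : A) ∈ X.degSub := by
  rw [mem_degSub_iff]
  refine X.apply_eq_zero_of_forall_grading _ fun j z hz => ?_
  by_cases hkj : k + j = X.n
  · obtain rfl : k = X.n - j := by omega
    rw [← X.pair_decompose hz, X.mem_degSub_iff.mp ha]
  · exact X.pair_degree k j hkj _ (SetLike.coe_mem _) z hz

end Decomposition

lemma degSub_isSubcomplex : X.IsSubcomplex X.degSub :=
  letI := X.internal.chooseDecomposition
  ⟨X.isGradedSubspace_of_decompose_mem fun _ ha => X.decompose_mem_degSub ha,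
    fun _ => X.d_mem_degSub⟩

section Hodge

variable {X} {H C : Submodule ℝ A}

lemma IsHodge.exists_eq_add_of_closed (hH : X.IsHodge H C) {k : A}
    (hk : X.d k = 0) : ∃ h ∈ H, ∃ b, k = h + X.d b := by
  have hk' : k ∈ H ⊔ Submodule.map X.d ⊤ := by
    rw [hH.2.2.2.2.2.2.1]
    exact ⟨hk, Submodule.mem_top⟩
  obtain ⟨h, hh, _, ⟨b, -, rfl⟩, rfl⟩ := Submodule.mem_sup.mp hk'
  exact ⟨h, hh, b, rfl⟩

lemma IsHodge.exists_eq_add (hH : X.IsHodge H C) (x : A) :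
    ∃ c ∈ C, ∃ k, X.d k = 0 ∧ x = c + k := by
  have hx : x ∈ C ⊔ (LinearMap.ker X.d ⊓ ⊤) := by
    rw [hH.2.2.2.2.2.2.2.2.1]
    exact Submodule.mem_top
  obtain ⟨c, hc, k, ⟨hk, -⟩, rfl⟩ := Submodule.mem_sup.mp hx
  exact ⟨c, hc, k, hk, rfl⟩

lemma IsHodge.mem_degSub_of_d_mem (hH : X.IsHodge H C) {c : A}
    (hc : c ∈ C) (hdc : X.d c ∈ X.degSub) : c ∈ X.degSub := by
  rw [mem_degSub_iff]
  intro y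
  obtain ⟨c', hc', k, hk, rfl⟩ := hH.exists_eq_add y
  obtain ⟨h, hh, b, rfl⟩ := hH.exists_eq_add_of_closed hk
  rw [map_add, map_add, hH.2.2.2.2.2.2.2.2.2.1 c hc c' hc', hH.2.2.2.2.2.2.2.2.2.2 c hc h hh,
    X.pair_d_eq_zero_of_d_mem_degSub hdc b, add_zero, add_zero]

end Hodge

lemma comap_d_degSub_le (hHodge : X.IsHodgeType) :
    X.degSub.comap X.d ≤ X.degSub ⊔ LinearMap.ker X.d := by
  obtain ⟨H, C, hH⟩ := hHodge
  intro x hx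
  obtain ⟨c, hc, k, hk, rfl⟩ := hH.exists_eq_add x
  have hdc : X.d c ∈ X.degSub := by simpa [hk] using hx
  exact Submodule.add_mem_sup (hH.mem_degSub_of_d_mem hc hdc) hk

lemma degSub_acyclic (hHodge : X.IsHodgeType) (hcoh : X.CohomNondeg) {a : A}
    (ha : a ∈ X.degSub) (hda : X.d a = 0) : ∃ z ∈ X.degSub, a = X.d z := by
  obtain ⟨z, rfl⟩ := hcoh a hda fun y _ => X.mem_degSub_iff.mp ha y
  obtain ⟨c, hc, k, hk, rfl⟩ := Submodule.mem_sup.mp (X.comap_d_degSub_le hHodge ha)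
  exact ⟨c, hc, by rw [map_add, LinearMap.mem_ker.mp hk, add_zero]⟩

section Quotient

variable {X} {B : Type*} [AddCommGroup B] [Module ℝ B] {Y : PairedComplex B} {q : A →ₗ[ℝ] B}

lemma IsQuotientMap.exists_closed_preimage (hq : X.IsQuotientMap Y q)
    (hHodge : X.IsHodgeType) {b : B} (hb : Y.d b = 0) :
    ∃ x : A, X.d x = 0 ∧ q x = b := by
  obtain ⟨hsurj, hker, hcomm, -⟩ := hq
  obtain ⟨x, rfl⟩ := hsurj b
  have hdx : X.d x ∈ X.degSub := by
    rw [← hker, LinearMap.mem_ker, hcomm, hb]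
  obtain ⟨c, hc, k, hk, rfl⟩ := Submodule.mem_sup.mp (X.comap_d_degSub_le hHodge hdx)
  have hqc : q c = 0 := by rwa [← LinearMap.mem_ker, hker]
  exact ⟨k, hk, by rw [map_add, hqc, zero_add]⟩

lemma IsQuotientMap.exact_of_map_exact (hq : X.IsQuotientMap Y q) (hcoh : X.CohomNondeg)
    {x : A} (hx : X.d x = 0) {c : B} (hc : q x = Y.d c) : ∃ z : A, x = X.d z := by
  obtain ⟨hsurj, hker, hcomm, -⟩ := hq
  obtain ⟨w, rfl⟩ := hsurj c
  have hdeg : x - X.d w ∈ X.degSub := by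
    rw [← hker, LinearMap.mem_ker, map_sub, hc, hcomm, sub_self]
  obtain ⟨z, hz⟩ := hcoh _ (by rw [map_sub, hx, X.d_sq, sub_zero])
    fun y _ => X.mem_degSub_iff.mp hdeg y
  exact ⟨w + z, by rw [map_add, ← hz, add_sub_cancel]⟩

end Quotient

end PairedComplex


section Statements

variable {A B : Type*} [AddCommGroup A] [Module ℝ A] [AddCommGroup B] [Module ℝ B]
/-- if `A` is of Hodge type and the cohomology pairing is nondegenerate,
then `A_deg` is an acyclic subcomplex and the quotient map onto the nondegenerate
quotient is a quasi-isomorphism. -/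
theorem stmt9 (X : PairedComplex A)
    (hHodge : X.IsHodgeType) (hcoh : X.CohomNondeg)
    (Y : PairedComplex B) (q : A →ₗ[ℝ] B) (hq : X.IsQuotientMap Y q) :
    (X.IsSubcomplex X.degSub ∧
      ∀ x ∈ X.degSub, X.d x = 0 → ∃ z ∈ X.degSub, x = X.d z) ∧
    (∀ b : B, Y.d b = 0 → ∃ x : A, X.d x = 0 ∧ ∃ c : B, q x - b = Y.d c) ∧
    (∀ x : A, X.d x = 0 → (∃ c : B, q x = Y.d c) → ∃ z : A, x = X.d z) := by
  refine ⟨⟨X.degSub_isSubcomplex, fun _ => X.degSub_acyclic hHodge hcoh⟩, ?_, ?_⟩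
  · intro b hb
    obtain ⟨x, hx, rfl⟩ := hq.exists_closed_preimage hHodge hb
    exact ⟨x, hx, 0, by rw [sub_self, map_zero]⟩
  · rintro x hx ⟨c, hc⟩
    exact hq.exact_of_map_exact hcoh hx hc

end Statements
end
end
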